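/- Let A be an associative unital ring and let (F, C) be an Ext^1-orthogonal pair of classes of left A-modules, both closed under extensions in the category of left A-modules. Assume that every left A-module is a quotient module of a module from F and a submodule of a module from C. Then a special precover sequence 0 → C' → F → M → 0 (with F ∈ F, C' ∈ C) exists for every left A-module M if and only if a special preenvelope sequence 0 → M → C → F' → 0 (with C ∈ C, F' ∈ F) exists for every left A-module M. -/

import Mathlib

/-! Common definitions for the formalization of statements from
"An explicit self-dual construction of complete cotorsion pairs in the relative context". -/

open CategoryTheory

universe u

noncomputable section

noncomputable instance moduleCatHasExt (A : Type u) [Ring A] :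
    HasExt.{u+1} (ModuleCat.{u} A) :=
  letI := HasDerivedCategory.standard (ModuleCat.{u} A)
  hasExt_of_hasDerivedCategory _

namespace CotorsionPaper

section OneRing

variable {A : Type u} [Ring A]

/-- `Ext^n_A(X, Y) = 0`. -/
def extVanish (X Y : ModuleCat.{u} A) (n : ℕ) : Prop :=
  Subsingleton (Abelian.Ext X Y n)

/-- Two classes of left `A`-modules are `Ext^1`-orthogonal. -/
def Ext1Orthogonal (F C : Set (ModuleCat.{u} A)) : Prop :=
  ∀ X ∈ F, ∀ Y ∈ C, extVanish X Y 1

/-- `F^{⊥₁}`. -/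
def rightPerp (F : Set (ModuleCat.{u} A)) : Set (ModuleCat.{u} A) :=
  {Y | ∀ X ∈ F, extVanish X Y 1}

/-- `^{⊥₁}C`. -/
def leftPerp (C : Set (ModuleCat.{u} A)) : Set (ModuleCat.{u} A) :=
  {X | ∀ Y ∈ C, extVanish X Y 1}

/-- `(F, C)` is a cotorsion pair. -/
def IsCotorsionPair (F C : Set (ModuleCat.{u} A)) : Prop :=
  C = rightPerp F ∧ F = leftPerp C

/-- `M` admits a special precover sequence `0 → C' → F → M → 0` with `F ∈ F`, `C' ∈ C`. -/
def HasSpecialPrecover (F C : Set (ModuleCat.{u} A)) (M : ModuleCat.{u} A) : Prop :=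
  ∃ (C' Fm : ModuleCat.{u} A) (i : C' ⟶ Fm) (p : Fm ⟶ M) (w : i ≫ p = 0),
    (ShortComplex.mk i p w).ShortExact ∧ Fm ∈ F ∧ C' ∈ C

/-- `M` admits a special preenvelope sequence `0 → M → C → F' → 0` with `C ∈ C`, `F' ∈ F`. -/
def HasSpecialPreenvelope (F C : Set (ModuleCat.{u} A)) (M : ModuleCat.{u} A) : Prop :=
  ∃ (Cm F' : ModuleCat.{u} A) (i : M ⟶ Cm) (p : Cm ⟶ F') (w : i ≫ p = 0),
    (ShortComplex.mk i p w).ShortExact ∧ Cm ∈ C ∧ F' ∈ F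

/-- The pair `(F, C)` admits approximation sequences. -/
def HasApproximations (F C : Set (ModuleCat.{u} A)) : Prop :=
  (∀ M : ModuleCat.{u} A, HasSpecialPrecover F C M) ∧
  (∀ M : ModuleCat.{u} A, HasSpecialPreenvelope F C M)

/-- `(F, C)` is a complete cotorsion pair. -/
def IsCompleteCotorsionPair (F C : Set (ModuleCat.{u} A)) : Prop :=
  IsCotorsionPair F C ∧ HasApproximations F C

/-- Hereditariness: `Ext^n(F, C) = 0` for all `F ∈ F`, `C ∈ C` and `n ≥ 1`. -/
def IsHereditary (F C : Set (ModuleCat.{u} A)) : Prop :=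
  ∀ X ∈ F, ∀ Y ∈ C, ∀ n : ℕ, 1 ≤ n → extVanish X Y n

/-- `X^⊕`: the class of all direct summands of modules from `X`. -/
def summands (X : Set (ModuleCat.{u} A)) : Set (ModuleCat.{u} A) :=
  {M | ∃ Y ∈ X, ∃ (i : M ⟶ Y) (r : Y ⟶ M), i ≫ r = 𝟙 M}

def ClosedUnderExtensions (F : Set (ModuleCat.{u} A)) : Prop :=
  ∀ (S : ShortComplex (ModuleCat.{u} A)), S.ShortExact → S.X₁ ∈ F → S.X₃ ∈ F → S.X₂ ∈ F

def ClosedUnderEpiKernels (F : Set (ModuleCat.{u} A)) : Prop :=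
  ∀ (S : ShortComplex (ModuleCat.{u} A)), S.ShortExact → S.X₂ ∈ F → S.X₃ ∈ F → S.X₁ ∈ F

def ClosedUnderMonoCokernels (C : Set (ModuleCat.{u} A)) : Prop :=
  ∀ (S : ShortComplex (ModuleCat.{u} A)), S.ShortExact → S.X₁ ∈ C → S.X₂ ∈ C → S.X₃ ∈ C

def EveryModuleIsQuotient (F : Set (ModuleCat.{u} A)) : Prop :=
  ∀ M : ModuleCat.{u} A, ∃ X ∈ F, ∃ p : X ⟶ M, Epi p

def EveryModuleIsSubmodule (C : Set (ModuleCat.{u} A)) : Prop :=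
  ∀ M : ModuleCat.{u} A, ∃ X ∈ C, ∃ i : M ⟶ X, Mono i

/-- `F` is a resolving class. -/
def IsResolving (F : Set (ModuleCat.{u} A)) : Prop :=
  ClosedUnderExtensions F ∧ ClosedUnderEpiKernels F ∧ EveryModuleIsQuotient F

/-- `C` is a coresolving class. -/
def IsCoresolving (C : Set (ModuleCat.{u} A)) : Prop :=
  ClosedUnderExtensions C ∧ ClosedUnderMonoCokernels C ∧ EveryModuleIsSubmodule C

/-- `M` has `F`-resolution dimension at most `k`: there is an exact sequence
`0 → F_k → ⋯ → F_0 → M → 0` with all `F_i ∈ F` (encoded as an everywhere exact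
`ℕ`-indexed resolution vanishing in degrees `> k`). -/
def ResolutionDimLE (F : Set (ModuleCat.{u} A)) (M : ModuleCat.{u} A) (k : ℕ) : Prop :=
  ∃ (G : ℕ → ModuleCat.{u} A) (d : ∀ m, G (m+1) ⟶ G m) (ε : G 0 ⟶ M)
    (hd : ∀ m, d (m+1) ≫ d m = 0) (hε : d 0 ≫ ε = 0),
    (∀ i, i ≤ k → G i ∈ F) ∧ (∀ i, k < i → Limits.IsZero (G i)) ∧ Epi ε ∧
    (ShortComplex.mk (d 0) ε hε).Exact ∧
    (∀ m, (ShortComplex.mk (d (m+1)) (d m) (hd m)).Exact)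

/-- `M` has `C`-coresolution dimension at most `k`: there is an exact sequence
`0 → M → C^0 → ⋯ → C^k → 0` with all `C^i ∈ C`. -/
def CoresolutionDimLE (C : Set (ModuleCat.{u} A)) (M : ModuleCat.{u} A) (k : ℕ) : Prop :=
  ∃ (G : ℕ → ModuleCat.{u} A) (d : ∀ m, G m ⟶ G (m+1)) (η : M ⟶ G 0)
    (hd : ∀ m, d m ≫ d (m+1) = 0) (hη : η ≫ d 0 = 0),
    (∀ i, i ≤ k → G i ∈ C) ∧ (∀ i, k < i → Limits.IsZero (G i)) ∧ Mono η ∧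
    (ShortComplex.mk η (d 0) hη).Exact ∧
    (∀ m, (ShortComplex.mk (d m) (d (m+1)) (hd m)).Exact)

/-- `N` is `α`-cofiltered by the class `T`: there is an `α`-indexed cofiltration of `N`
(a compatible inverse system with `G 0 = 0`, `G α = N`, surjective successor transition
maps, which is continuous -- i.e. maps isomorphically onto the inverse limit -- at limit
ordinals) whose successive kernels are isomorphic to modules from `T`. -/
def IsCofilteredBy (T : Set (ModuleCat.{u} A)) (α : Ordinal.{u}) (N : ModuleCat.{u} A) : Prop :=
  ∃ (G : ∀ i : Ordinal.{u}, i ≤ α → ModuleCat.{u} A)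
    (π : ∀ (i j : Ordinal.{u}) (hj : j ≤ i) (hi : i ≤ α), G i hi ⟶ G j (hj.trans hi)),
    (∀ i (hi : i ≤ α), π i i le_rfl hi = 𝟙 (G i hi)) ∧
    (∀ i j k (hk : k ≤ j) (hj : j ≤ i) (hi : i ≤ α),
      π i j hj hi ≫ π j k hk (hj.trans hi) = π i k (hk.trans hj) hi) ∧
    Limits.IsZero (G 0 (by simp)) ∧
    G α le_rfl = N ∧
    (∀ i (hi : i + 1 ≤ α), Epi (π (i+1) i (by simp) hi)) ∧
    (∀ i (hi : i ≤ α), Order.IsSuccLimit i →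
      (∀ x y : G i hi,
        (∀ j (hj : j < i), π i j hj.le hi x = π i j hj.le hi y) → x = y) ∧
      (∀ c : ∀ (j : Ordinal.{u}) (hj : j < i), G j (hj.le.trans hi),
        (∀ j k (hk : k < j) (hj : j < i),
          π j k hk.le (hj.le.trans hi) (c j hj) = c k (hk.trans hj)) →
        ∃ x : G i hi, ∀ j (hj : j < i), π i j hj.le hi x = c j hj)) ∧
    (∀ i (hi : i + 1 ≤ α), ∃ X ∈ T,
      Nonempty ((LinearMap.ker (π (i+1) i (by simp) hi).hom) ≃ₗ[A] X))

/-- `Cof_α(T)`. -/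
def Cof (T : Set (ModuleCat.{u} A)) (α : Ordinal.{u}) : Set (ModuleCat.{u} A) :=
  {N | IsCofilteredBy T α N}

/-- `Cof(T)`: the union of `Cof_α(T)` over all ordinals `α`. -/
def CofAll (T : Set (ModuleCat.{u} A)) : Set (ModuleCat.{u} A) :=
  {N | ∃ α : Ordinal.{u}, IsCofilteredBy T α N}

/-- `M` is `α`-filtered by the class `S`: there is an increasing, continuous chain of
submodules starting at `0` and ending at `M` whose successive quotients are isomorphic
to modules from `S`. -/
def IsFilteredBy (S : Set (ModuleCat.{u} A)) (α : Ordinal.{u}) (M : ModuleCat.{u} A) : Prop :=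
  ∃ Fl : ∀ i : Ordinal.{u}, i ≤ α → Submodule A M,
    (∀ i j (hj : j ≤ i) (hi : i ≤ α), Fl j (hj.trans hi) ≤ Fl i hi) ∧
    Fl 0 (by simp) = ⊥ ∧
    Fl α le_rfl = ⊤ ∧
    (∀ i (hi : i ≤ α), Order.IsSuccLimit i →
      Fl i hi = ⨆ (j : Ordinal.{u}) (hj : j < i), Fl j (hj.le.trans hi)) ∧
    (∀ i (hi : i + 1 ≤ α), ∃ X ∈ S,
      Nonempty ((↥(Fl (i+1) hi) ⧸ (Submodule.comap (Fl (i+1) hi).subtype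
        (Fl i ((by simp : i ≤ i + 1).trans hi)))) ≃ₗ[A] X))

/-- `Fil_α(S)`. -/
def Fil (S : Set (ModuleCat.{u} A)) (α : Ordinal.{u}) : Set (ModuleCat.{u} A) :=
  {M | IsFilteredBy S α M}

/-- `Fil(S)`: the union of `Fil_α(S)` over all ordinals `α`. -/
def FilAll (S : Set (ModuleCat.{u} A)) : Set (ModuleCat.{u} A) :=
  {M | ∃ α : Ordinal.{u}, IsFilteredBy S α M}

/-- The product of `κ` copies of `U`. -/
def piPow (U : ModuleCat.{u} A) (κ : Type u) : ModuleCat.{u} A :=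
  ModuleCat.of A (κ → ↥U)

/-- The direct sum of `κ` copies of `U`. -/
def sumPow (U : ModuleCat.{u} A) (κ : Type u) : ModuleCat.{u} A :=
  ModuleCat.of A (κ →₀ ↥U)

/-- `Prod(U)`: direct summands of products of copies of `U`. -/
def ProdClass (U : ModuleCat.{u} A) : Set (ModuleCat.{u} A) :=
  {X | ∃ (κ : Type u) (i : X ⟶ piPow U κ) (r : piPow U κ ⟶ X), i ≫ r = 𝟙 X}

/-- `Add(U)`: direct summands of direct sums of copies of `U`. -/
def AddClass (U : ModuleCat.{u} A) : Set (ModuleCat.{u} A) :=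
  {X | ∃ (κ : Type u) (i : X ⟶ sumPow U κ) (r : sumPow U κ ⟶ X), i ≫ r = 𝟙 X}

/-- `J` is an injective cogenerator. -/
def IsInjectiveCogenerator (J : ModuleCat.{u} A) : Prop :=
  Injective J ∧ IsCoseparator J

/-- `P` is a projective generator. -/
def IsProjectiveGenerator (P : ModuleCat.{u} A) : Prop :=
  Projective P ∧ IsSeparator P

/-- `U` is an `n`-cotilting module: (C1) injective dimension at most `n`;
(C2) `Ext^i(U^κ, U) = 0` for all `i > 0` and all `κ`; (C3) there is an exact sequence
`0 → U_n → ⋯ → U_0 → J → 0` with `J` an injective cogenerator and `U_i ∈ Prod(U)`. -/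
def IsCotilting (n : ℕ) (U : ModuleCat.{u} A) : Prop :=
  CoresolutionDimLE {J : ModuleCat.{u} A | Injective J} U n ∧
  (∀ (κ : Type u) (i : ℕ), 0 < i → extVanish (piPow U κ) U i) ∧
  (∃ J : ModuleCat.{u} A, IsInjectiveCogenerator J ∧ ResolutionDimLE (ProdClass U) J n)

/-- The cotilting class `{}^{⊥_{>0}}U` induced by `U`. -/
def cotiltingClass (U : ModuleCat.{u} A) : Set (ModuleCat.{u} A) :=
  {M | ∀ i : ℕ, 0 < i → extVanish M U i}

/-- `D` admits an `m`-step cofiltration `D = G_m ↠ ⋯ ↠ G_1 ↠ G_0 = 0` with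
`ker (G_{i+1} → G_i)` isomorphic to a module from `T i`. -/
def FinCofilteredLevels (m : ℕ) (T : Fin m → Set (ModuleCat.{u} A)) :
    Set (ModuleCat.{u} A) :=
  {D | ∃ (G : Fin (m+1) → ModuleCat.{u} A) (p : ∀ i : Fin m, G i.succ ⟶ G i.castSucc),
    Limits.IsZero (G 0) ∧ G (Fin.last m) = D ∧ (∀ i, Epi (p i)) ∧
    (∀ i : Fin m, ∃ X ∈ T i, Nonempty ((LinearMap.ker (p i).hom) ≃ₗ[A] X))}

/-- `D` admits an `m`-step cofiltration with all successive kernels isomorphic to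
modules from the class `T`. -/
def FinCofiltered (m : ℕ) (T : Set (ModuleCat.{u} A)) : Set (ModuleCat.{u} A) :=
  FinCofilteredLevels m (fun _ => T)

/-- `G` admits an `m`-step filtration `0 = F_0 ⊆ F_1 ⊆ ⋯ ⊆ F_m = G` with
`F_{i+1}/F_i` isomorphic to a module from `T i`. -/
def FinFilteredLevels (m : ℕ) (T : Fin m → Set (ModuleCat.{u} A)) :
    Set (ModuleCat.{u} A) :=
  {G | ∃ Fl : Fin (m+1) → Submodule A G,
    Monotone Fl ∧ Fl 0 = ⊥ ∧ Fl (Fin.last m) = ⊤ ∧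
    (∀ i : Fin m, ∃ X ∈ T i, Nonempty
      ((↥(Fl i.succ) ⧸ (Submodule.comap (Fl i.succ).subtype (Fl i.castSucc))) ≃ₗ[A] X))}

end OneRing

section TwoRings

variable {R : Type u} {A : Type u} [Ring R] [Ring A]

/-- The underlying left `R`-module of `A`, via `f : R →+* A`. -/
def AasR (f : R →+* A) : ModuleCat.{u} R :=
  (ModuleCat.restrictScalars f).obj (ModuleCat.of A A)

/-- The class of left `A`-modules whose underlying `R`-module belongs to `F`. -/
def liftClass (f : R →+* A) (F : Set (ModuleCat.{u} R)) : Set (ModuleCat.{u} A) :=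
  {M | (ModuleCat.restrictScalars f).obj M ∈ F}

/-- The coinduced module `Hom_R(A, M)`. -/
def coind (f : R →+* A) (M : ModuleCat.{u} R) : ModuleCat.{u} A :=
  (ModuleCat.coextendScalars f).obj M

/-- The class of left `A`-modules of the form `Hom_R(A, C)`, `C ∈ 𝒞` (up to isomorphism). -/
def coindClass (f : R →+* A) (C : Set (ModuleCat.{u} R)) : Set (ModuleCat.{u} A) :=
  {N | ∃ X ∈ C, Nonempty (N ≅ coind f X)}

/-- `(T, η)` is the module induced from the `R`-module `L` along `f`, i.e. `T ≅ A ⊗_R L`: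
`η : L → T` is an `R`-linear map which is universal among `R`-linear maps from `L` to
(the restriction of) left `A`-modules. -/
def IsInducedFrom (f : R →+* A) (L : ModuleCat.{u} R) (T : ModuleCat.{u} A)
    (η : L ⟶ (ModuleCat.restrictScalars f).obj T) : Prop :=
  ∀ (X : ModuleCat.{u} A) (g : L ⟶ (ModuleCat.restrictScalars f).obj X),
    ∃! h : T ⟶ X, η ≫ (ModuleCat.restrictScalars f).map h = g

/-- The class of left `A`-modules of the form `A ⊗_R X`, `X ∈ F`. -/
def indClass (f : R →+* A) (F : Set (ModuleCat.{u} R)) : Set (ModuleCat.{u} A) :=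
  {T | ∃ X ∈ F, ∃ η, IsInducedFrom f X T η}

/-- `Tor^R_i(A, L) = 0` for all `0 < i ≤ n`: there is a projective resolution
`P_• → L` of the `R`-module `L` such that the induced complex of `A`-modules
`A ⊗_R P_•` is exact in homological degrees `1, …, n`. -/
def TorVanishesUpTo (f : R →+* A) (L : ModuleCat.{u} R) (n : ℕ) : Prop :=
  ∃ (P : ℕ → ModuleCat.{u} R) (d : ∀ m, P (m+1) ⟶ P m) (ε : P 0 ⟶ L)
    (hd : ∀ m, d (m+1) ≫ d m = 0) (hε : d 0 ≫ ε = 0),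
    (∀ m, Projective (P m)) ∧ Epi ε ∧ (ShortComplex.mk (d 0) ε hε).Exact ∧
    (∀ m, (ShortComplex.mk (d (m+1)) (d m) (hd m)).Exact) ∧
    ∃ (T : ℕ → ModuleCat.{u} A) (η : ∀ m, P m ⟶ (ModuleCat.restrictScalars f).obj (T m))
      (D : ∀ m, T (m+1) ⟶ T m) (hD : ∀ m, D (m+1) ≫ D m = 0),
      (∀ m, IsInducedFrom f (P m) (T m) (η m)) ∧
      (∀ m, η (m+1) ≫ (ModuleCat.restrictScalars f).map (D m) = d m ≫ η m) ∧
      (∀ j, j + 1 ≤ n → (ShortComplex.mk (D (j+1)) (D j) (hD j)).Exact)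

/-- The `R`-module structure on the character module `A⁺ = Hom_ℤ(A, ℚ/ℤ)`,
given by `(r • φ) a = φ (a * f r)`. -/
def aplusModule (f : R →+* A) : Module R (A →+ AddCircle (1 : ℚ)) where
  smul r φ := φ.comp (AddMonoidHom.mulRight (f r))
  one_smul φ := AddMonoidHom.ext fun a => by
    have h : f (1 : R) = 1 := map_one f
    show φ (a * f 1) = φ a
    rw [h, mul_one]
  mul_smul r s φ := AddMonoidHom.ext fun a => by
    have h : f (r * s) = f r * f s := map_mul f r s
    show φ (a * f (r * s)) = φ (a * f r * f s)
    rw [h, mul_assoc]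
  smul_zero r := AddMonoidHom.ext fun _ => rfl
  smul_add r φ ψ := AddMonoidHom.ext fun _ => rfl
  add_smul r s φ := AddMonoidHom.ext fun a => by
    have h : f (r + s) = f r + f s := map_add f r s
    show φ (a * f (r + s)) = φ (a * f r) + φ (a * f s)
    rw [h, mul_add, map_add]
  zero_smul φ := AddMonoidHom.ext fun a => by
    have h : f (0 : R) = 0 := map_zero f
    show φ (a * f 0) = 0
    rw [h, mul_zero, map_zero]

/-- The character module `A⁺ = Hom_ℤ(A, ℚ/ℤ)` as a left `R`-module. -/
def aplus (f : R →+* A) : ModuleCat.{u} R :=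
  @ModuleCat.of R _ (A →+ AddCircle (1 : ℚ)) _ (aplusModule f)

end TwoRings

end CotorsionPaper

open CotorsionPaper

/-! Both directions are a single diagram chase. Embed `M` into `C₀ ∈ C` and take a special
precover `0 → C' → F₀ → C₀/M → 0`; the pullback `P` of `C₀ → C₀/M ← F₀` sits in
`0 → M → P → F₀ → 0` and in `0 → C' → P → C₀ → 0`, so `P ∈ C`. Dually, cover `M` by `F₀ ∈ F`,
take a special preenvelope `0 → K → C₀ → F' → 0` of the kernel `K`, and push out
`C₀ ← K → F₀`. -/

open Limits

namespace CategoryTheory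

variable {𝒜 : Type*} [Category 𝒜] [Abelian 𝒜]

theorem IsPullback.shortExact_of_shortExact {K P X Y Q : 𝒜} {fst : P ⟶ X} {snd : P ⟶ Y}
    {q : X ⟶ Q} {p : Y ⟶ Q} (sq : IsPullback fst snd q p) {i : K ⟶ X} {w : i ≫ q = 0}
    (hS : (ShortComplex.mk i q w).ShortExact) {f : K ⟶ P} (hf : f ≫ fst = i)
    (hf' : f ≫ snd = 0) : (ShortComplex.mk f snd hf').ShortExact := by
  have := hS.mono_f
  have := hS.epi_g
  have : Mono f := mono_of_mono_fac hf
  have : Epi snd := (MorphismProperty.epimorphisms 𝒜).of_isPullback sq (.infer_property q)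
  refine .mk' ?_ inferInstance inferInstance
  rw [ShortComplex.exact_iff_exact_up_to_refinements]
  intro T x hx
  obtain ⟨T', π, hπ, m, hm⟩ := hS.exact.exact_up_to_refinements (x ≫ fst)
    (by simp [sq.w, reassoc_of% hx])
  refine ⟨T', π, hπ, m, sq.hom_ext ?_ ?_⟩
  · simpa [hf] using hm
  · simp [hx, hf']

theorem IsPushout.shortExact_of_shortExact {K P X Y Q : 𝒜} {t : K ⟶ X} {l : K ⟶ Y}
    {r : X ⟶ P} {b : Y ⟶ P} (sq : IsPushout t l r b) {g : X ⟶ Q} {w : t ≫ g = 0}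
    (hS : (ShortComplex.mk t g w).ShortExact) {h : P ⟶ Q} (hh : r ≫ h = g)
    (hh' : b ≫ h = 0) : (ShortComplex.mk b h hh').ShortExact :=
  (sq.op.flip.shortExact_of_shortExact hS.op (f := h.op) (by rw [← op_comp, hh])
    (by rw [← op_comp, hh', op_zero])).unop

end CategoryTheory

namespace CotorsionPaper

variable {A : Type u} [Ring A] {F C : Set (ModuleCat.{u} A)}

theorem hasSpecialPreenvelope_of_mono (hCext : ClosedUnderExtensions C) {M C₀ : ModuleCat.{u} A}
    (i : M ⟶ C₀) [Mono i] (hC₀ : C₀ ∈ C) (h : HasSpecialPrecover F C (cokernel i)) :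
    HasSpecialPreenvelope F C M := by
  obtain ⟨C', F₀, j, p, w, hS, hF₀, hC'⟩ := h
  have sq := IsPullback.of_hasPullback (cokernel.π i) p
  have hi : (ShortComplex.mk i (cokernel.π i) (cokernel.condition i)).ShortExact :=
    { exact := ShortComplex.exact_cokernel i }
  have hC'P := sq.flip.shortExact_of_shortExact hS (f := pullback.lift 0 j (by simp [w]))
    (pullback.lift_snd _ _ _) (pullback.lift_fst _ _ _)
  exact ⟨_, F₀, pullback.lift i 0 (by simp), pullback.snd _ _, pullback.lift_snd _ _ _,
    sq.shortExact_of_shortExact hi (pullback.lift_fst _ _ _) _, hCext _ hC'P hC' hC₀, hF₀⟩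

theorem hasSpecialPrecover_of_epi (hFext : ClosedUnderExtensions F) {M F₀ : ModuleCat.{u} A}
    (p : F₀ ⟶ M) [Epi p] (hF₀ : F₀ ∈ F) (h : HasSpecialPreenvelope F C (kernel p)) :
    HasSpecialPrecover F C M := by
  obtain ⟨C₀, F', i, q, w, hS, hC₀, hF'⟩ := h
  have sq := IsPushout.of_hasPushout i (kernel.ι p)
  have hp : (ShortComplex.mk (kernel.ι p) p (kernel.condition p)).ShortExact :=
    { exact := ShortComplex.exact_kernel p }
  have hF₀P := sq.shortExact_of_shortExact hS (h := pushout.desc q 0 (by simp [w]))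
    (pushout.inl_desc _ _ _) (pushout.inr_desc _ _ _)
  exact ⟨C₀, _, pushout.inl _ _, pushout.desc 0 p (by simp), pushout.inl_desc _ _ _,
    sq.flip.shortExact_of_shortExact hp (pushout.inr_desc _ _ _) _, hFext _ hF₀P hF₀ hF', hC₀⟩

end CotorsionPaper

theorem salce_lemma_general {A : Type u} [Ring A] (F C : Set (ModuleCat.{u} A))
    (hFext : ClosedUnderExtensions F)
    (hCext : ClosedUnderExtensions C)
    (hquot : EveryModuleIsQuotient F)
    (hsub : EveryModuleIsSubmodule C) :
    (∀ M : ModuleCat.{u} A, HasSpecialPrecover F C M) ↔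
      (∀ M : ModuleCat.{u} A, HasSpecialPreenvelope F C M) := by
  constructor
  · intro hpc M
    obtain ⟨C₀, hC₀, i, _⟩ := hsub M
    exact hasSpecialPreenvelope_of_mono hCext i hC₀ (hpc _)
  · intro hpe M
    obtain ⟨F₀, hF₀, p, _⟩ := hquot M
    exact hasSpecialPrecover_of_epi hFext p hF₀ (hpe _)

/-- **Salce lemma.** Let `(F, C)` be an `Ext¹`-orthogonal pair of classes of
left `A`-modules, both closed under extensions.  Assume every left `A`-module is a quotient
of a module from `F` and a submodule of a module from `C`.  Then special precover sequences
exist for all modules iff special preenvelope sequences exist for all modules. -/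
theorem salce_lemma {A : Type u} [Ring A] (F C : Set (ModuleCat.{u} A))
    (horth : Ext1Orthogonal F C)
    (hFext : ClosedUnderExtensions F)
    (hCext : ClosedUnderExtensions C)
    (hquot : EveryModuleIsQuotient F)
    (hsub : EveryModuleIsSubmodule C) :
    (∀ M : ModuleCat.{u} A, HasSpecialPrecover F C M) ↔
      (∀ M : ModuleCat.{u} A, HasSpecialPreenvelope F C M) :=
  salce_lemma_general F C hFext hCext hquot hsub

end
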